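/- arXiv:1711.07453 — 2 statements merged into one kernel-verified Lean document; each statement's English description precedes it below -/
import Mathlib

section
/- For p-dimensional vectors x and y with nonnegative entries and a p×p matrix m with positive entries, if we set Δ(s) := min over coordinates j with s^j < 1 of (1 - s^j) for s ∈ [0,1]^p with s ≠ 1, and if all entries of m satisfy 1 ≤ (max_{i,j} m^{i,j})/(min_{i,j} m^{i,j}) ≤ γ for some γ ≥ 1, then for every standard basis vector e_i, Δ(s)/(p²γ²) ≤ |e_i^T m (1 - s)| / |m e_i| ≤ γ² p², where |·| denotes the L¹ norm. -/
open Finset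

/-- For `s ∈ [0,1]^p`, `s ≠ 1`, and a `p × p` matrix `m` with positive,
`γ`-comparable entries (max entry ≤ γ · min entry, γ ≥ 1), setting
`Δ(s) = min_{j : s_j < 1} (1 - s_j)`, one has, for every standard basis vector `e_i`,
`Δ(s)/(p²γ²) ≤ |e_iᵀ m (1-s)| / |m e_i| ≤ γ² p²`, where `|·|` is the L¹ norm, so that
`|e_iᵀ m (1-s)| = |∑_j m_{ij}(1-s_j)|` and `|m e_i| = ∑_j |m_{ji}|`. -/
theorem stmt0 (p : ℕ) (hp : 1 ≤ p) (γ : ℝ) (hγ : 1 ≤ γ)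
    (m : Matrix (Fin p) (Fin p) ℝ)
    (hpos : ∀ i j, 0 < m i j)
    (hcomp : ∀ i j k l, m i j ≤ γ * m k l)
    (s : Fin p → ℝ) (hs0 : ∀ j, 0 ≤ s j) (hs1 : ∀ j, s j ≤ 1)
    (hne : (Finset.univ.filter fun j => s j < 1).Nonempty)
    (Δ : ℝ)
    (hΔ : Δ = (Finset.univ.filter fun j => s j < 1).inf' hne (fun j => 1 - s j))
    (i : Fin p) :
    Δ / ((p : ℝ) ^ 2 * γ ^ 2) ≤ |∑ j, m i j * (1 - s j)| / (∑ j, |m j i|) ∧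
      |∑ j, m i j * (1 - s j)| / (∑ j, |m j i|) ≤ γ ^ 2 * (p : ℝ) ^ 2 := by
  haveI : NeZero p := ⟨by omega⟩
  obtain ⟨j₀, hj₀⟩ := hne
  have hpR : (1 : ℝ) ≤ (p : ℝ) := by exact_mod_cast hp
  have hA0 : 0 ≤ ∑ j, m i j * (1 - s j) :=
    Finset.sum_nonneg fun j _ => mul_nonneg (hpos i j).le (by linarith [hs1 j])
  have hDeq : (∑ j, |m j i|) = ∑ j, m j i :=
    Finset.sum_congr rfl fun j _ => abs_of_pos (hpos j i)
  have hD : 0 < ∑ j, |m j i| := by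
    rw [hDeq]
    exact Finset.sum_pos (fun j _ => hpos j i) Finset.univ_nonempty
  rw [abs_of_nonneg hA0]
  -- key facts
  have hΔ0 : 0 ≤ Δ := by
    rw [hΔ]
    apply Finset.le_inf'
    intro j hj
    linarith [hs1 j]
  have hΔle : Δ ≤ 1 - s j₀ := hΔ ▸ Finset.inf'_le _ hj₀
  have hA' : Δ * m i j₀ ≤ ∑ j, m i j * (1 - s j) := by
    calc Δ * m i j₀ ≤ m i j₀ * (1 - s j₀) := by nlinarith [hpos i j₀]
    _ ≤ ∑ j, m i j * (1 - s j) :=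
        Finset.single_le_sum (f := fun j => m i j * (1 - s j))
          (fun j _ => mul_nonneg (hpos i j).le (by linarith [hs1 j])) (Finset.mem_univ j₀)
  have hD' : (∑ j, |m j i|) ≤ (p : ℝ) * (γ * m i j₀) := by
    rw [hDeq]
    calc (∑ j, m j i) ≤ ∑ _j : Fin p, γ * m i j₀ :=
          Finset.sum_le_sum fun j _ => hcomp j i i j₀
    _ = (p : ℝ) * (γ * m i j₀) := by simp [mul_comm]
  have hAub : (∑ j, m i j * (1 - s j)) ≤ γ * (∑ j, |m j i|) := by
    rw [hDeq, Finset.mul_sum]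
    apply Finset.sum_le_sum
    intro j _
    calc m i j * (1 - s j) ≤ m i j * 1 := by
          have := hpos i j
          nlinarith [hs0 j]
    _ = m i j := mul_one _
    _ ≤ γ * m j i := hcomp i j j i
  have hpγ : 0 < (p : ℝ) ^ 2 * γ ^ 2 := by positivity
  have hg1 : γ ≤ γ ^ 2 := by nlinarith
  have hg2 : γ ^ 2 ≤ γ ^ 2 * (p : ℝ) ^ 2 := by
    nlinarith [mul_nonneg (sq_nonneg γ) (show (0:ℝ) ≤ (p:ℝ) ^ 2 - 1 by nlinarith)]
  constructor
  · rw [div_le_div_iff₀ hpγ hD]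
    have h1 : Δ * (∑ j, |m j i|) ≤ Δ * ((p : ℝ) * (γ * m i j₀)) :=
      mul_le_mul_of_nonneg_left hD' hΔ0
    have h2 : (p : ℝ) * γ * (Δ * m i j₀) ≤ (p : ℝ) * γ * ∑ j, m i j * (1 - s j) :=
      mul_le_mul_of_nonneg_left hA' (by positivity)
    nlinarith [mul_le_mul_of_nonneg_left (show (p:ℝ) * γ ≤ (p:ℝ)^2 * γ^2 by nlinarith) hA0]
  · rw [div_le_iff₀ hD]
    nlinarith [mul_le_mul_of_nonneg_right (hg1.trans hg2) hD.le]
end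

section
/- Let m_1, …, m_n be p×p matrices with strictly positive entries, each satisfying max_{i,j} m_k^{i,j} ≤ γ · min_{i,j} m_k^{i,j}. Then the product L := m_n m_{n-1} ⋯ m_1 also has strictly positive entries and satisfies max_{i,j} L^{i,j} ≤ γ² · min_{i,j} L^{i,j}. -/
private lemma fk_prod_pos {p : ℕ} (l : List (Matrix (Fin p) (Fin p) ℝ))
    (hl : l ≠ []) (h : ∀ M ∈ l, ∀ i j, 0 < M i j) :
    ∀ i j, 0 < l.prod i j := by
  induction l with
  | nil => simp at hl
  | cons a t ih =>
    rcases eq_or_ne t [] with rfl | ht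
    · simpa using h a (by simp)
    · intro i j
      rw [List.prod_cons, Matrix.mul_apply]
      apply Finset.sum_pos
      · intro k _
        exact mul_pos (h a (by simp) i k)
          (ih ht (fun M hM => h M (by simp [hM])) k j)
      · exact ⟨i, Finset.mem_univ i⟩

private lemma fk_prod_colcomp {p : ℕ} (γ : ℝ) (l : List (Matrix (Fin p) (Fin p) ℝ))
    (hl : l ≠ []) (hpos : ∀ M ∈ l, ∀ i j, 0 < M i j)
    (h : ∀ M ∈ l, ∀ i j i' j', M i j ≤ γ * M i' j') :
    ∀ i j j', l.prod i j ≤ γ * l.prod i j' := by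
  induction l with
  | nil => simp at hl
  | cons a t ih =>
    rcases eq_or_ne t [] with rfl | ht
    · intro i j j'; simpa using h a (by simp) i j i j'
    · intro i j j'
      rw [List.prod_cons, Matrix.mul_apply, Matrix.mul_apply, Finset.mul_sum]
      apply Finset.sum_le_sum
      intro k _
      have hc := ih ht (fun M hM => hpos M (by simp [hM]))
        (fun M hM => h M (by simp [hM])) k j j'
      calc a i k * t.prod k j ≤ a i k * (γ * t.prod k j') :=
            mul_le_mul_of_nonneg_left hc (le_of_lt (hpos a (by simp) i k))
        _ = γ * (a i k * t.prod k j') := by ring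

private lemma fk_prod_comp {p : ℕ} (γ : ℝ) (hγ : 1 ≤ γ)
    (l : List (Matrix (Fin p) (Fin p) ℝ))
    (hl : l ≠ []) (hpos : ∀ M ∈ l, ∀ i j, 0 < M i j)
    (h : ∀ M ∈ l, ∀ i j i' j', M i j ≤ γ * M i' j') :
    ∀ i j i' j', l.prod i j ≤ γ ^ 2 * l.prod i' j' := by
  induction l with
  | nil => simp at hl
  | cons a t _ =>
    rcases eq_or_ne t [] with rfl | ht
    · intro i j i' j'
      simp only [List.prod_cons, List.prod_nil, mul_one]
      have h1 := h a (by simp) i j i' j'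
      have h2 : γ * a i' j' ≤ γ ^ 2 * a i' j' := by
        have h3 := hpos a (by simp) i' j'
        have h4 : γ ≤ γ ^ 2 := by nlinarith
        exact mul_le_mul_of_nonneg_right h4 (le_of_lt h3)
      linarith
    · intro i j i' j'
      simp only [List.prod_cons, Matrix.mul_apply]
      rw [Finset.mul_sum]
      apply Finset.sum_le_sum
      intro k _
      have hc := fk_prod_colcomp γ t ht (fun M hM => hpos M (by simp [hM]))
        (fun M hM => h M (by simp [hM])) k j j'
      have ha := h a (by simp) i k i' k
      have hapos := hpos a (by simp) i k
      have hapos' := hpos a (by simp) i' k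
      have htpos := fk_prod_pos t ht (fun M hM => hpos M (by simp [hM])) k j
      have htpos' := fk_prod_pos t ht (fun M hM => hpos M (by simp [hM])) k j'
      calc a i k * t.prod k j ≤ (γ * a i' k) * (γ * t.prod k j') := by nlinarith
        _ = γ ^ 2 * (a i' k * t.prod k j') := by ring

/-- Lemma 2 of Furstenberg–Kesten: if `m_1, …, m_n` are `p × p` matrices with
strictly positive entries, each satisfying max entry ≤ γ · min entry, then the product
`L = m_n m_{n-1} ⋯ m_1` has strictly positive entries and satisfies
max entry of `L` ≤ γ² · min entry of `L`. -/
theorem stmt13 (p : ℕ) (hp : 1 ≤ p) (γ : ℝ) (hγ : 1 ≤ γ)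
    (n : ℕ) (hn : 1 ≤ n) (m : ℕ → Matrix (Fin p) (Fin p) ℝ)
    (hpos : ∀ k i j, 0 < m k i j)
    (hcomp : ∀ k i j i' j', m k i j ≤ γ * m k i' j')
    (L : Matrix (Fin p) (Fin p) ℝ)
    (hL : L = ((List.range n).map (fun j => m (n - j))).prod) :
    (∀ i j, 0 < L i j) ∧ ∀ i j i' j', L i j ≤ γ ^ 2 * L i' j' := by
  set l : List (Matrix (Fin p) (Fin p) ℝ) := (List.range n).map (fun j => m (n - j)) with hl
  have hne : l ≠ [] := by
    simp [hl, List.range_eq_nil]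
    omega
  have hmem : ∀ M ∈ l, ∀ i j, 0 < M i j := by
    intro M hM
    simp only [hl, List.mem_map] at hM
    obtain ⟨j, _, rfl⟩ := hM
    exact hpos _
  have hmem2 : ∀ M ∈ l, ∀ i j i' j', M i j ≤ γ * M i' j' := by
    intro M hM
    simp only [hl, List.mem_map] at hM
    obtain ⟨j, _, rfl⟩ := hM
    exact hcomp _
  subst hL
  exact ⟨fk_prod_pos l hne hmem, fk_prod_comp γ hγ l hne hmem hmem2⟩
end
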